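/- For paths u,v,x,y in E with r(u)=r(v) and r(x)=r(y), the L-class inequality L_{uv⁻¹} ≤_L L_{xy⁻¹} holds in G(E) if and only if v = yt for some path t. -/

import Mathlib

universe u

/-- A directed graph: vertices, edges, source and range maps. -/
structure DGraph : Type (u + 1) where
  V : Type u
  Ed : Type u
  src : Ed → V
  rng : Ed → V

/-- The end vertex of a list of edges started at `v` (ignoring composability). -/
def DGraph.ranAux (G : DGraph) : G.V → List G.Ed → G.V
  | v, [] => v
  | _, e :: es => DGraph.ranAux G (G.rng e) es

/-- The edges `l` form a composable path starting at `v`. -/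
def DGraph.Chain (G : DGraph) : G.V → List G.Ed → Prop
  | _, [] => True
  | v, e :: es => G.src e = v ∧ DGraph.Chain G (G.rng e) es

theorem DGraph.ranAux_append (G : DGraph) (v : G.V) (l1 l2 : List G.Ed) :
    G.ranAux v (l1 ++ l2) = G.ranAux (G.ranAux v l1) l2 := by
  induction l1 generalizing v with
  | nil => rfl
  | cons e es ih => exact ih (G.rng e)

theorem DGraph.chain_append (G : DGraph) {v : G.V} {l1 l2 : List G.Ed}
    (h1 : G.Chain v l1) (h2 : G.Chain (G.ranAux v l1) l2) : G.Chain v (l1 ++ l2) := by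
  induction l1 generalizing v with
  | nil => exact h2
  | cons e es ih => exact ⟨h1.1, ih h1.2 h2⟩

theorem DGraph.chain_append_right (G : DGraph) {v : G.V} {l1 l2 : List G.Ed}
    (h : G.Chain v (l1 ++ l2)) : G.Chain (G.ranAux v l1) l2 := by
  induction l1 generalizing v with
  | nil => exact h
  | cons e es ih => exact ih h.2

/-- A (finite, directed) path in the graph `G`: a start vertex together
with a composable list of edges. Vertices are the paths of length `0`. -/
structure GPath (G : DGraph.{u}) : Type u where
  start : G.V
  edges : List G.Ed
  chain : G.Chain start edges

namespace GPath

variable {G : DGraph}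

/-- The range (end vertex) of a path. -/
def ran (p : GPath G) : G.V := G.ranAux p.start p.edges

/-- The path of length zero at a vertex. -/
def ofVertex (G : DGraph) (v : G.V) : GPath G := ⟨v, [], trivial⟩

/-- The path of length one given by an edge. -/
def ofEdge (G : DGraph) (e : G.Ed) : GPath G := ⟨G.src e, [e], ⟨rfl, trivial⟩⟩

@[simp] theorem ofVertex_ran (G : DGraph) (v : G.V) : (ofVertex G v).ran = v := rfl

@[simp] theorem ofEdge_ran (G : DGraph) (e : G.Ed) : (ofEdge G e).ran = G.rng e := rfl

/-- Concatenation of composable paths. -/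
def append (p q : GPath G) (h : p.ran = q.start) : GPath G :=
  ⟨p.start, p.edges ++ q.edges,
    G.chain_append p.chain (by
      show G.Chain (G.ranAux p.start p.edges) q.edges
      have : G.ranAux p.start p.edges = q.start := h
      rw [this]; exact q.chain)⟩

@[simp] theorem append_ran (p q : GPath G) (h : p.ran = q.start) :
    (p.append q h).ran = q.ran := by
  show G.ranAux p.start (p.edges ++ q.edges) = q.ran
  rw [G.ranAux_append]
  have : G.ranAux p.start p.edges = q.start := h
  rw [this]; rfl

/-- `y` is an initial segment of the path `p`. -/
def IsPrefixOf (y p : GPath G) : Prop := y.start = p.start ∧ y.edges <+: p.edges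

/-- The remainder `t` of `p` after its initial segment `y`, so that `p = y ++ t`. -/
def remainder (y p : GPath G) (h : y.IsPrefixOf p) : GPath G :=
  ⟨y.ran, p.edges.drop y.edges.length, by
    obtain ⟨l2, hl⟩ := h.2
    rw [← hl, List.drop_left]
    show G.Chain (G.ranAux y.start y.edges) l2
    rw [h.1]
    exact G.chain_append_right (v := p.start) (l1 := y.edges) (l2 := l2)
      (by rw [hl]; exact p.chain)⟩

@[simp] theorem remainder_ran (y p : GPath G) (h : y.IsPrefixOf p) :
    (y.remainder p h).ran = p.ran := by
  obtain ⟨l2, hl⟩ := h.2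
  show G.ranAux y.ran (p.edges.drop y.edges.length) = p.ran
  rw [← hl, List.drop_left]
  show G.ranAux (G.ranAux y.start y.edges) l2 = p.ran
  rw [h.1, ← G.ranAux_append, hl]
  rfl

end GPath

/-- The graph inverse semigroup of `G` (in normal form): its elements are zero together
with the elements `x * y⁻¹` for paths `x`, `y` with the same range. -/
inductive GIS (G : DGraph.{u}) : Type u where
  | zero : GIS G
  | mk (x y : GPath G) (h : x.ran = y.ran) : GIS G

instance (G : DGraph) : Zero (GIS G) := ⟨GIS.zero⟩

open scoped Classical in
/-- Multiplication in the graph inverse semigroup. -/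
noncomputable def GIS.gmul {G : DGraph} : GIS G → GIS G → GIS G
  | GIS.zero, _ => GIS.zero
  | GIS.mk _ _ _, GIS.zero => GIS.zero
  | GIS.mk x y hxy, GIS.mk p q hpq =>
    if h1 : y.IsPrefixOf p then
      GIS.mk (x.append (y.remainder p h1) hxy) q
        (by exact (GPath.append_ran _ _ _).trans ((GPath.remainder_ran _ _ _).trans hpq))
    else if h2 : p.IsPrefixOf y then
      GIS.mk x (q.append (p.remainder y h2) hpq.symm)
        (by exact hxy.trans ((GPath.append_ran _ _ _).trans (GPath.remainder_ran _ _ _)).symm)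
    else GIS.zero

noncomputable instance (G : DGraph) : Mul (GIS G) := ⟨GIS.gmul⟩

/-- The element of `GIS G` corresponding to a vertex `v` (i.e. `v = v * v⁻¹`). -/
def vertexEl (G : DGraph) (v : G.V) : GIS G :=
  GIS.mk (GPath.ofVertex G v) (GPath.ofVertex G v) rfl

/-- The element of `GIS G` corresponding to an edge `e` (i.e. `e = e * r(e)⁻¹`). -/
def edgeEl (G : DGraph) (e : G.Ed) : GIS G :=
  GIS.mk (GPath.ofEdge G e) (GPath.ofVertex G (G.rng e)) rfl

/-- The inverse operation on `GIS G`: `(x y⁻¹)⁻¹ = y x⁻¹`. -/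
def GIS.inv {G : DGraph} : GIS G → GIS G
  | GIS.zero => GIS.zero
  | GIS.mk x y h => GIS.mk y x h.symm

/-- `a` lies in the principal left ideal generated by `b` (`S¹a ⊆ S¹b`). -/
def GreenLeL {G : DGraph} (a b : GIS G) : Prop := a = b ∨ ∃ c, a = c * b

/-- `a` lies in the principal right ideal generated by `b` (`aS¹ ⊆ bS¹`). -/
def GreenLeR {G : DGraph} (a b : GIS G) : Prop := a = b ∨ ∃ c, a = b * c

/-- `a` lies in the principal two-sided ideal generated by `b` (`S¹aS¹ ⊆ S¹bS¹`). -/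
def GreenLeJ {G : DGraph} (a b : GIS G) : Prop :=
  a = b ∨ (∃ c, a = c * b) ∨ (∃ c, a = b * c) ∨ (∃ c d, a = c * b * d)

/-- Green's `L`-relation. -/
def GreenEqL {G : DGraph} (a b : GIS G) : Prop := GreenLeL a b ∧ GreenLeL b a

/-- Green's `R`-relation. -/
def GreenEqR {G : DGraph} (a b : GIS G) : Prop := GreenLeR a b ∧ GreenLeR b a

/-- Green's `J`-relation. -/
def GreenEqJ {G : DGraph} (a b : GIS G) : Prop := GreenLeJ a b ∧ GreenLeJ b a

/-- There is a (possibly trivial) directed path from `v` to `w` in `G`. -/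
def GConnected (G : DGraph) (v w : G.V) : Prop := ∃ t : GPath G, t.start = v ∧ t.ran = w

/-- `I` is a (two-sided) ideal of `GIS G`. -/
def GISIdeal {G : DGraph} (I : Set (GIS G)) : Prop :=
  ∀ a ∈ I, ∀ c : GIS G, a * c ∈ I ∧ c * a ∈ I

/-- `R` is the Rees congruence of some ideal `I`, i.e. `R = (I × I) ∪ Δ`. -/
def IsReesCon {G : DGraph} (R : Con (GIS G)) : Prop :=
  ∃ I : Set (GIS G), GISIdeal I ∧ ∀ a b : GIS G, R a b ↔ (a ∈ I ∧ b ∈ I) ∨ a = b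

/-- The only congruences on `GIS G` are the universal one and the diagonal. -/
def CongFree (G : DGraph) : Prop :=
  ∀ R : Con (GIS G), (∀ a b : GIS G, R a b) ∨ (∀ a b : GIS G, R a b ↔ a = b)

/-- The natural partial order on the inverse semigroup `GIS G`:
`a ≤ b` iff `a = ε * b` for some idempotent `ε`. -/
def natLe {G : DGraph} (a b : GIS G) : Prop := ∃ ε : GIS G, ε * ε = ε ∧ a = ε * b

/-- The graph obtained from `G` by deleting the vertices in `S` and all
edges incident to them. -/
def DGraph.delete (G : DGraph) (S : Set G.V) : DGraph where
  V := {v : G.V // v ∉ S}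
  Ed := {e : G.Ed // G.src e ∉ S ∧ G.rng e ∉ S}
  src e := ⟨G.src e.1, e.2.1⟩
  rng e := ⟨G.rng e.1, e.2.2⟩

/-- The graph with a single vertex and `n` loops; its graph inverse semigroup
is the polycyclic monoid `Pₙ`. -/
def polyGraph (n : ℕ) : DGraph :=
  ⟨PUnit, Fin n, fun _ => PUnit.unit, fun _ => PUnit.unit⟩

/-! In normal form, a nonzero product `(p q⁻¹)(x y⁻¹)` is `p (x - q) y⁻¹` when `q` is a prefix
of `x` and `p (y (q - x))⁻¹` when `x` is a prefix of `q`; either way its second path extends `y`.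
Conversely `u (x t)⁻¹ · x y⁻¹ = u t⁻¹ x⁻¹ x y⁻¹ = u (y t)⁻¹`. -/

namespace GPath

variable {G : DGraph}

theorem ext {p q : GPath G} (hstart : p.start = q.start) (hedges : p.edges = q.edges) :
    p = q := by
  cases p; cases q; simp_all

theorem append_of_edges_eq_nil (p t : GPath G) (h : p.ran = t.start) (ht : t.edges = []) :
    p.append t h = p :=
  ext rfl (by simp [append, ht])

theorem append_ofVertex_ran (p : GPath G) : p.append (ofVertex G p.ran) rfl = p :=
  append_of_edges_eq_nil _ _ _ rfl

theorem isPrefixOf_append (p t : GPath G) (h : p.ran = t.start) :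
    p.IsPrefixOf (p.append t h) :=
  ⟨rfl, t.edges, rfl⟩

theorem edges_eq_nil_of_append_isPrefixOf {p t : GPath G} {h : p.ran = t.start}
    (hpre : (p.append t h).IsPrefixOf p) : t.edges = [] := by
  have hlen := hpre.2.length_le
  simp only [append, List.length_append] at hlen
  exact List.eq_nil_of_length_eq_zero (by omega)

end GPath

namespace GIS

variable {G : DGraph}

theorem mk_congr {x y x' y' : GPath G} {h : x.ran = y.ran} {h' : x'.ran = y'.ran}
    (hx : x = x') (hy : y = y') : mk x y h = mk x' y' h' := by
  subst hx hy; rfl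

open scoped Classical in
theorem mk_mul_mk (x y p q : GPath G) (hxy : x.ran = y.ran) (hpq : p.ran = q.ran) :
    mk x y hxy * mk p q hpq =
      if h1 : y.IsPrefixOf p then
        mk (x.append (y.remainder p h1) hxy) q
          (by exact (GPath.append_ran _ _ _).trans ((GPath.remainder_ran _ _ _).trans hpq))
      else if h2 : p.IsPrefixOf y then
        mk x (q.append (p.remainder y h2) hpq.symm)
          (by exact hxy.trans ((GPath.append_ran _ _ _).trans (GPath.remainder_ran _ _ _)).symm)
      else zero := rfl

theorem exists_append_of_mul_mk_eq_mk {x y u v : GPath G} {hx : x.ran = y.ran}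
    {hu : u.ran = v.ran} (c : GIS G) (hc : c * mk x y hx = mk u v hu) :
    ∃ (t : GPath G) (h : y.ran = t.start), v = y.append t h := by
  cases c with
  | zero => cases hc
  | mk p q hpq =>
    rw [mk_mul_mk] at hc
    split_ifs at hc with hqx hxq
    · obtain ⟨-, hyv⟩ := mk.inj hc
      exact ⟨_, rfl, hyv.symm.trans y.append_ofVertex_ran.symm⟩
    · obtain ⟨-, hyv⟩ := mk.inj hc
      exact ⟨_, hx.symm, hyv.symm⟩

theorem mk_append_mul_mk (u x y t : GPath G) (h : x.ran = t.start) (hx : x.ran = y.ran)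
    (hu : u.ran = (x.append t h).ran) :
    mk u (x.append t h) hu * mk x y hx =
      mk u (y.append t (hx.symm.trans h)) (hu.trans (by simp)) := by
  rw [mk_mul_mk]
  split_ifs with hxtx hxxt
  · have ht := GPath.edges_eq_nil_of_append_isPrefixOf hxtx
    refine mk_congr (GPath.append_of_edges_eq_nil _ _ _ ?_)
      (GPath.append_of_edges_eq_nil _ _ _ ht).symm
    exact List.drop_eq_nil_of_le (by simp [GPath.append])
  · exact mk_congr rfl (GPath.ext rfl (by simp [GPath.remainder, GPath.append]))
  · exact absurd (x.isPrefixOf_append t h) hxxt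

end GIS

/-- For paths `u,v,x,y` with `r(u)=r(v)` and `r(x)=r(y)`,
`L_{uv⁻¹} ≤_L L_{xy⁻¹}` in `G(E)` iff `v = yt` for some path `t`. -/
theorem stmt2 (G : DGraph) (u v x y : GPath G) (hu : u.ran = v.ran) (hx : x.ran = y.ran) :
    GreenLeL (GIS.mk u v hu) (GIS.mk x y hx) ↔
      ∃ (t : GPath G) (h : y.ran = t.start), v = y.append t h := by
  constructor
  · rintro (heq | ⟨c, hc⟩)
    · obtain ⟨-, hvy⟩ := GIS.mk.inj heq
      exact ⟨_, rfl, hvy.trans y.append_ofVertex_ran.symm⟩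
    · exact GIS.exists_append_of_mul_mk_eq_mk c hc.symm
  · rintro ⟨t, h, rfl⟩
    exact Or.inr ⟨_, (GIS.mk_append_mul_mk u x y t (hx.trans h) hx (hu.trans (by simp))).symm⟩
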